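/- arXiv:math/0702612 — 5 statements merged into one kernel-verified Lean document; each statement's English description precedes it below -/
import Mathlib

section
/- Let g be a finite-dimensional real Lie algebra with a biinvariant inner product Q, let L ⊆ g be a linear subspace, and set L₁ := [L, g]. Then [L, L₁] = L₁. -/
/-- The span of all brackets `⁅a, b⁆` with `a ∈ A`, `b ∈ B`. -/
def bracketSpan {g : Type*} [LieRing g] [LieAlgebra ℝ g]
    (A B : Submodule ℝ g) : Submodule ℝ g :=
  Submodule.span ℝ {z | ∃ a ∈ A, ∃ b ∈ B, z = ⁅a, b⁆}

/-!
Let `M = [L, L₁] ⊆ L₁`. Since `Q` is anisotropic, `g = M ⊕ M^⊥`, so it suffices to show that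
`p ∈ L₁ ∩ M^⊥` vanishes. For `a ∈ L` invariance gives `Q ⁅a, p⁆ ⁅a, p⁆ = -Q ⁅a, ⁅a, p⁆⁆ p = 0`,
as `⁅a, ⁅a, p⁆⁆ ∈ M`; hence `ad L` kills `p`, and invariance again makes `p` orthogonal to
`L₁ = [L, g]`, in particular to itself.
-/

namespace LinearMap.BilinForm

variable {K V : Type*} [Field K] [AddCommGroup V] [Module K V] [FiniteDimensional K V]
  {B : LinearMap.BilinForm K V}

theorem isCompl_orthogonal_of_anisotropic (hB : B.toQuadraticMap.Anisotropic)
    (W : Submodule K V) : IsCompl W (B.orthogonal W) := by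
  refine (Submodule.isCompl_iff_disjoint _ _ ?_).mpr ?_
  · -- `dim W + dim W^⊥ ≥ dim V` holds for any form, reflexive or not.
    have := B.finrank_add_finrank_orthogonal' W
    omega
  · exact (Submodule.disjoint_def).mpr fun x hxW hx => hB x (hx x hxW)

theorem eq_of_le_of_inf_orthogonal_eq_bot (hB : B.toQuadraticMap.Anisotropic)
    {M N : Submodule K V} (hMN : M ≤ N) (h : N ⊓ B.orthogonal M = ⊥) : M = N :=
  calc M = M ⊔ B.orthogonal M ⊓ N := by rw [inf_comm, h, sup_bot_eq]
    _ = (M ⊔ B.orthogonal M) ⊓ N := (sup_inf_assoc_of_le _ hMN).symm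
    _ = N := by rw [(isCompl_orthogonal_of_anisotropic hB M).sup_eq_top, top_inf_eq]

end LinearMap.BilinForm

section bracketSpan

variable {g : Type*} [LieRing g] [LieAlgebra ℝ g]

theorem lie_mem_bracketSpan {A B : Submodule ℝ g} {a b : g} (ha : a ∈ A) (hb : b ∈ B) :
    ⁅a, b⁆ ∈ bracketSpan A B :=
  Submodule.subset_span ⟨a, ha, b, hb, rfl⟩

theorem bracketSpan_le_iff {A B N : Submodule ℝ g} :
    bracketSpan A B ≤ N ↔ ∀ a ∈ A, ∀ b ∈ B, ⁅a, b⁆ ∈ N := by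
  rw [bracketSpan, Submodule.span_le]
  constructor
  · exact fun h a ha b hb => h ⟨a, ha, b, hb, rfl⟩
  · rintro h _ ⟨a, ha, b, hb, rfl⟩
    exact h a ha b hb

theorem bracketSpan_mono_right {A B B' : Submodule ℝ g} (h : B ≤ B') :
    bracketSpan A B ≤ bracketSpan A B' :=
  bracketSpan_le_iff.mpr fun _ ha _ hb => lie_mem_bracketSpan ha (h hb)

variable {Q : LinearMap.BilinForm ℝ g} (hbi : ∀ z x y : g, Q ⁅z, x⁆ y + Q x ⁅z, y⁆ = 0)
include hbi

theorem lie_eq_zero_of_mem_orthogonal_bracketSpan (hQ : Q.toQuadraticMap.Anisotropic)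
    {A B : Submodule ℝ g} {a p : g} (hp : p ∈ Q.orthogonal (bracketSpan A B)) (ha : a ∈ A)
    (hap : ⁅a, p⁆ ∈ B) : ⁅a, p⁆ = 0 := by
  apply hQ
  simpa [hp _ (lie_mem_bracketSpan ha hap)] using hbi a ⁅a, p⁆ p

theorem mem_orthogonal_bracketSpan_top_of_lie_eq_zero {A : Submodule ℝ g} {p : g}
    (hp : ∀ a ∈ A, ⁅a, p⁆ = 0) : p ∈ Q.orthogonal (bracketSpan A ⊤) := by
  have hker : bracketSpan A ⊤ ≤ LinearMap.ker (Q.flip p) :=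
    bracketSpan_le_iff.mpr fun a ha y _ => by simpa [hp a ha] using hbi a y p
  exact fun n hn => hker hn

end bracketSpan

theorem bracket_L_L1_eq_L1_general
    (g : Type*) [LieRing g] [LieAlgebra ℝ g] [FiniteDimensional ℝ g]
    (Q : LinearMap.BilinForm ℝ g)
    (hpos : ∀ x : g, x ≠ 0 → 0 < Q x x)
    (hbi : ∀ z x y : g, Q ⁅z, x⁆ y + Q x ⁅z, y⁆ = 0)
    (L : Submodule ℝ g) :
    bracketSpan L (bracketSpan L ⊤) = bracketSpan L ⊤ := by
  have hQ : Q.toQuadraticMap.Anisotropic := fun x hx =>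
    by_contra fun hx0 => (hpos x hx0).ne' hx
  refine LinearMap.BilinForm.eq_of_le_of_inf_orthogonal_eq_bot hQ
    (bracketSpan_mono_right le_top) ?_
  refine (Submodule.eq_bot_iff _).mpr ?_
  rintro p ⟨hpL₁, hp⟩
  have hlie : ∀ a ∈ L, ⁅a, p⁆ = 0 := fun a ha =>
    lie_eq_zero_of_mem_orthogonal_bracketSpan hbi hQ hp ha (lie_mem_bracketSpan ha trivial)
  exact hQ p (mem_orthogonal_bracketSpan_top_of_lie_eq_zero hbi hlie p hpL₁)

/-- Let `g` be a finite-dimensional real Lie algebra with a biinvariant inner product `Q`,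
`L ⊆ g` a linear subspace and `L₁ := [L, g]`.  Then `[L, L₁] = L₁`. -/
theorem bracket_L_L1_eq_L1
    (g : Type*) [LieRing g] [LieAlgebra ℝ g] [FiniteDimensional ℝ g]
    (Q : LinearMap.BilinForm ℝ g)
    (hsymm : ∀ x y : g, Q x y = Q y x)
    (hpos : ∀ x : g, x ≠ 0 → 0 < Q x x)
    (hbi : ∀ z x y : g, Q ⁅z, x⁆ y + Q x ⁅z, y⁆ = 0)
    (L : Submodule ℝ g) :
    bracketSpan L (bracketSpan L ⊤) = bracketSpan L ⊤ :=
  bracket_L_L1_eq_L1_general g Q hpos hbi L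
end

section
/- Let g be a compact semisimple Lie algebra (so z(g) = 0) with a biinvariant inner product Q, equipped with an involutive Lie algebra automorphism τ whose +1-eigenspace is k, such that g has no proper nonzero τ-invariant ideal. Let s ⊊ g be a proper subalgebra, l₁, l₂ ⊆ s subalgebras with (ad_{l₂} ∘ ad_{l₁})|_{s⊥} = 0, and suppose there exists a nonzero ad_s-invariant and τ-invariant subspace W ⊆ s⊥ with [l₁, W] = W. Then l₂ = 0. -/
open LieAlgebra LinearMap

namespace LinearMap.BilinForm.lieInvariant

variable {R L : Type*} [CommRing R] [LieRing L] [LieAlgebra R L] {Q : LinearMap.BilinForm R L}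

lemma apply_lie_apply (hQ : Q.lieInvariant L) (x y z : L) : Q ⁅x, y⁆ z = Q x ⁅y, z⁆ := by
  rw [← lie_skew, map_neg, LinearMap.neg_apply, hQ, neg_neg]

lemma apply_lie_lie (hQ : Q.lieInvariant L) (u x z v : L) :
    Q u ⁅x, ⁅z, v⁆⁆ = Q ⁅z, ⁅x, u⁆⁆ v := by
  rw [← neg_neg (Q u _), ← hQ, hQ z]

lemma lie_mem_orthogonal (hQ : Q.lieInvariant L) {s : Submodule R L}
    (hs : ∀ x ∈ s, ∀ y ∈ s, ⁅x, y⁆ ∈ s) {a v : L} (ha : a ∈ s) (hv : v ∈ Q.orthogonal s) :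
    ⁅a, v⁆ ∈ Q.orthogonal s := by
  intro n hn
  simpa [hv _ (hs a ha n hn)] using (hQ a n v).symm

end LinearMap.BilinForm.lieInvariant

lemma disjoint_orthogonal_of_anisotropic {R M : Type*} [CommRing R] [AddCommGroup M] [Module R M]
    {Q : LinearMap.BilinForm R M} (hQ : Q.toQuadraticMap.Anisotropic) (s : Submodule R M) :
    Disjoint s (Q.orthogonal s) :=
  Submodule.disjoint_def.mpr fun x hs hx ↦ hQ x (hx x hs)

lemma isCompl_orthogonal_of_anisotropic {K V : Type*} [Field K] [AddCommGroup V] [Module K V]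
    [FiniteDimensional K V] {Q : LinearMap.BilinForm K V} (hQ : Q.toQuadraticMap.Anisotropic)
    (hrefl : Q.IsRefl) (s : Submodule K V) : IsCompl s (Q.orthogonal s) :=
  (Q.isCompl_orthogonal_iff_disjoint hrefl).mpr (disjoint_orthogonal_of_anisotropic hQ s)

lemma isCompl_ker_range_ad {K L : Type*} [Field K] [LieRing L] [LieAlgebra K L]
    [FiniteDimensional K L] {Q : LinearMap.BilinForm K L} (hQ : Q.toQuadraticMap.Anisotropic)
    (hinv : Q.lieInvariant L) (z : L) : IsCompl (ker (ad K L z)) (range (ad K L z)) := by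
  refine (Submodule.isCompl_iff_disjoint _ _
    (by rw [add_comm, finrank_range_add_finrank_ker])).mpr ?_
  rw [Submodule.disjoint_def]
  rintro _ hx ⟨u, rfl⟩
  apply hQ
  simp only [mem_ker, ad_apply] at hx
  simp [hinv z u, hx]

section Centralizer

variable (R : Type*) {L : Type*} [CommRing R] [LieRing L] [LieAlgebra R L]

def centralizerAdRange (z : L) : Submodule R L :=
  ker (ad R L z) ⊓ ⨅ d, ker (ad R L ⁅z, d⁆)

variable {R}

lemma mem_centralizerAdRange {z t : L} :
    t ∈ centralizerAdRange R z ↔ ⁅z, t⁆ = 0 ∧ ∀ d : L, ⁅⁅z, d⁆, t⁆ = 0 := by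
  simp [centralizerAdRange]

lemma lie_mem_centralizerAdRange {z : L} (hz : Codisjoint (ker (ad R L z)) (range (ad R L z)))
    (v : L) {t : L} (ht : t ∈ centralizerAdRange R z) : ⁅v, t⁆ ∈ centralizerAdRange R z := by
  obtain ⟨hzt, hRt⟩ := mem_centralizerAdRange.mp ht
  obtain ⟨v₀, _, hv₀, ⟨u, rfl⟩, rfl⟩ := Submodule.codisjoint_iff_exists_add_eq.mp hz v
  rw [mem_ker, ad_apply] at hv₀
  rw [add_lie, ad_apply, hRt u, add_zero, mem_centralizerAdRange]
  refine ⟨by rw [leibniz_lie, hv₀, zero_lie, hzt, lie_zero, add_zero], fun d ↦ ?_⟩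
  rw [leibniz_lie, hRt d, lie_zero, add_zero, lie_lie z d v₀, hv₀, lie_zero, sub_zero, hRt]

end Centralizer

lemma eq_top_of_le_of_lie_mem {R L : Type*} [CommRing R] [LieRing L] [LieAlgebra R L]
    {τ : L →ₗ⁅R⁆ L} (hirr : ∀ I : LieIdeal R L, (∀ x ∈ I, τ x ∈ I) → I = ⊥ ∨ I = ⊤)
    {W N : Submodule R L} (hW : W ≠ ⊥) (hWτ : ∀ w ∈ W, τ w ∈ W) (hWN : W ≤ N)
    (hN : ∀ x : L, ∀ t ∈ N, ⁅x, t⁆ ∈ N) : N = ⊤ := by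
  set I := LieSubmodule.lieSpan R L (W : Set L)
  have hIτ : I ≤ LieIdeal.comap τ I :=
    LieSubmodule.lieSpan_le.mpr fun w hw ↦ LieSubmodule.subset_lieSpan (hWτ w hw)
  have hI : I ≠ ⊥ := fun h ↦ hW <| eq_bot_iff.mpr fun w hw ↦ by
    have hwI : w ∈ I := LieSubmodule.subset_lieSpan hw
    rw [h, LieSubmodule.mem_bot] at hwI
    simp [hwI]
  have hIN : I ≤ { N with lie_mem := hN _ _ } := LieSubmodule.lieSpan_le.mpr hWN
  have hItop : I = ⊤ := (hirr I fun x hx ↦ hIτ hx).resolve_left hI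
  rw [hItop] at hIN
  exact eq_top_iff.mpr fun x _ ↦ hIN (LieSubmodule.mem_top x)

section Orthogonal

variable {R L : Type*} [CommRing R] [LieRing L] [LieAlgebra R L] {Q : LinearMap.BilinForm R L}
  {s : Submodule R L} {x z : L}

lemma lie_lie_eq_zero_of_lie_lie_eq_zero (hQ : Q.toQuadraticMap.Anisotropic)
    (hinv : Q.lieInvariant L) (hs : ∀ x ∈ s, ∀ y ∈ s, ⁅x, y⁆ ∈ s) (hx : x ∈ s) (hz : z ∈ s)
    (h : ∀ u ∈ Q.orthogonal s, ⁅z, ⁅x, u⁆⁆ = 0) {v : L} (hv : v ∈ Q.orthogonal s) :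
    ⁅x, ⁅z, v⁆⁆ = 0 := by
  have hm : ⁅x, ⁅z, v⁆⁆ ∈ Q.orthogonal s :=
    hinv.lie_mem_orthogonal hs hx (hinv.lie_mem_orthogonal hs hz hv)
  apply hQ
  change Q _ _ = 0
  rw [hinv.apply_lie_lie, h _ hm, map_zero, LinearMap.zero_apply]

lemma lie_lie_mem_of_lie_lie_eq_zero (hQ : Q.toQuadraticMap.Anisotropic)
    (hinv : Q.lieInvariant L) (hs : ∀ x ∈ s, ∀ y ∈ s, ⁅x, y⁆ ∈ s)
    (hcod : Codisjoint s (Q.orthogonal s)) (hx : x ∈ s) (hz : z ∈ s)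
    (h : ∀ u ∈ Q.orthogonal s, ⁅z, ⁅x, u⁆⁆ = 0) (e : L) : ⁅x, ⁅z, e⁆⁆ ∈ s := by
  obtain ⟨a, b, ha, hb, rfl⟩ := Submodule.codisjoint_iff_exists_add_eq.mp hcod e
  rw [lie_add, lie_add, lie_lie_eq_zero_of_lie_lie_eq_zero hQ hinv hs hx hz h hb, add_zero]
  exact hs x hx _ (hs z hz a ha)

lemma lie_lie_eq_zero_of_lie_lie_mem (hQ : Q.toQuadraticMap.Anisotropic) (hinv : Q.lieInvariant L)
    (hs : ∀ x ∈ s, ∀ y ∈ s, ⁅x, y⁆ ∈ s) (hcod : Codisjoint s (Q.orthogonal s)) {W : Submodule R L}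
    (hWs : ∀ a ∈ s, ∀ w ∈ W, ⁅a, w⁆ ∈ W) (hz : z ∈ s) (hzW : ∀ w ∈ W, ⁅z, w⁆ = 0) {v w : L}
    (hw : w ∈ W) (hmem : ⁅⁅z, v⁆, w⁆ ∈ s) : ⁅⁅z, v⁆, w⁆ = 0 := by
  obtain ⟨a, b, ha, hb, hab⟩ := Submodule.codisjoint_iff_exists_add_eq.mp hcod ⁅v, w⁆
  have hsplit : ⁅⁅z, v⁆, w⁆ = ⁅z, a⁆ + ⁅z, b⁆ := by
    rw [lie_lie, hzW w hw, lie_zero, sub_zero, ← hab, lie_add]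
  have hzb : ⁅z, b⁆ = 0 := by
    refine Submodule.disjoint_def.mp (disjoint_orthogonal_of_anisotropic hQ s) _ ?_
      (hinv.lie_mem_orthogonal hs hz hb)
    rw [eq_sub_of_add_eq' hsplit.symm]
    exact sub_mem hmem (hs z hz a ha)
  have hW0 : ⁅⁅⁅z, v⁆, w⁆, w⁆ = 0 := by
    rw [hsplit, hzb, add_zero, lie_lie, hzW _ (hWs a ha w hw), hzW w hw, lie_zero, sub_zero]
  apply hQ
  change Q _ _ = 0
  rw [hinv.apply_lie_apply, ← lie_skew w, hW0, neg_zero, map_zero]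

end Orthogonal

section BracketSpan

variable {g : Type*} [LieRing g] [LieAlgebra ℝ g]

lemma lie_mem_of_mem_bracketSpan {A B N : Submodule ℝ g} {y x : g}
    (h : ∀ a ∈ A, ∀ b ∈ B, ⁅y, ⁅a, b⁆⁆ ∈ N) (hx : x ∈ bracketSpan A B) : ⁅y, x⁆ ∈ N := by
  have : bracketSpan A B ≤ N.comap (ad ℝ g y) :=
    Submodule.span_le.mpr fun _ ⟨a, ha, b, hb, hab⟩ ↦ hab ▸ h a ha b hb
  exact this hx

variable {Q : LinearMap.BilinForm ℝ g} {s l₁ W : Submodule ℝ g} {z : g}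

lemma le_centralizerAdRange (hQ : Q.toQuadraticMap.Anisotropic) (hinv : Q.lieInvariant g)
    (hs : ∀ x ∈ s, ∀ y ∈ s, ⁅x, y⁆ ∈ s) (hcod : Codisjoint s (Q.orthogonal s)) (hl₁s : l₁ ≤ s)
    (hz : z ∈ s) (hvanish : ∀ x ∈ l₁, ∀ u ∈ Q.orthogonal s, ⁅z, ⁅x, u⁆⁆ = 0)
    (hWperp : W ≤ Q.orthogonal s) (hWs : ∀ a ∈ s, ∀ w ∈ W, ⁅a, w⁆ ∈ W)
    (hl₁W : bracketSpan l₁ W = W) : W ≤ centralizerAdRange ℝ z := by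
  have hzW : ∀ w ∈ W, ⁅z, w⁆ = 0 := fun w hw ↦ by
    rw [← hl₁W] at hw
    exact (Submodule.mem_bot ℝ).mp <| lie_mem_of_mem_bracketSpan
      (fun x hx w' hw' ↦ (Submodule.mem_bot ℝ).mpr (hvanish x hx w' (hWperp hw'))) hw
  have hmW : ∀ v ∈ Q.orthogonal s, ∀ w ∈ W, ⁅⁅z, v⁆, w⁆ ∈ s := fun v hv w hw ↦ by
    rw [← hl₁W] at hw
    refine lie_mem_of_mem_bracketSpan (fun x hx w' hw' ↦ ?_) hw
    have hx0 : ⁅⁅z, v⁆, x⁆ = 0 := by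
      rw [← lie_skew, lie_lie_eq_zero_of_lie_lie_eq_zero hQ hinv hs (hl₁s hx) hz
        (hvanish x hx) hv, neg_zero]
    rw [leibniz_lie, hx0, zero_lie, zero_add, lie_lie z v w', hzW w' hw', lie_zero, sub_zero]
    exact lie_lie_mem_of_lie_lie_eq_zero hQ hinv hs hcod (hl₁s hx) hz (hvanish x hx) _
  intro w hw
  refine mem_centralizerAdRange.mpr ⟨hzW w hw, fun d ↦ ?_⟩
  obtain ⟨a, v, ha, hv, rfl⟩ := Submodule.codisjoint_iff_exists_add_eq.mp hcod d
  rw [lie_add, add_lie, lie_lie z a w, hzW _ (hWs a ha w hw), hzW w hw, lie_zero, sub_zero,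
    zero_add]
  exact lie_lie_eq_zero_of_lie_lie_mem hQ hinv hs hcod hWs hz hzW hw (hmW v hv w hw)

end BracketSpan

theorem l2_eq_bot_of_composition_vanishes_general
    (g : Type*) [LieRing g] [LieAlgebra ℝ g] [FiniteDimensional ℝ g]
    (hcenter : LieAlgebra.center ℝ g = ⊥)
    (Q : LinearMap.BilinForm ℝ g)
    (hsymm : ∀ x y : g, Q x y = Q y x)
    (hpos : ∀ x : g, x ≠ 0 → 0 < Q x x)
    (hbi : ∀ z x y : g, Q ⁅z, x⁆ y + Q x ⁅z, y⁆ = 0)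
    (τ : g →ₗ⁅ℝ⁆ g)
    (hirr : ∀ I : LieIdeal ℝ g, (∀ x ∈ I, τ x ∈ I) → I = ⊥ ∨ I = ⊤)
    (s l₁ l₂ W : Submodule ℝ g)
    (hs : ∀ x ∈ s, ∀ y ∈ s, ⁅x, y⁆ ∈ s)
    (hl₁s : l₁ ≤ s) (hl₂s : l₂ ≤ s)
    (hvanish : ∀ x ∈ l₁, ∀ y ∈ l₂, ∀ v ∈ Q.orthogonal s, ⁅y, ⁅x, v⁆⁆ = 0)
    (hWne : W ≠ ⊥)
    (hWperp : W ≤ Q.orthogonal s)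
    (hWinv : ∀ x ∈ s, ∀ w ∈ W, ⁅x, w⁆ ∈ W)
    (hWτ : ∀ w ∈ W, τ w ∈ W)
    (hl₁W : bracketSpan l₁ W = W) :
    l₂ = ⊥ := by
  have hinv : Q.lieInvariant g := fun z x y ↦ eq_neg_of_add_eq_zero_left (hbi z x y)
  have hQ : Q.toQuadraticMap.Anisotropic := fun x hx ↦ by_contra fun h ↦ (hpos x h).ne' hx
  have hcod : Codisjoint s (Q.orthogonal s) :=
    (isCompl_orthogonal_of_anisotropic hQ (fun x y h ↦ (hsymm y x).trans h) s).codisjoint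
  refine (Submodule.eq_bot_iff l₂).mpr fun z hz ↦ ?_
  have hWD : W ≤ centralizerAdRange ℝ z :=
    le_centralizerAdRange hQ hinv hs hcod hl₁s (hl₂s hz) (fun x hx ↦ hvanish x hx z hz) hWperp
      hWinv hl₁W
  have hD : centralizerAdRange ℝ z = ⊤ := eq_top_of_le_of_lie_mem hirr hWne hWτ hWD
    fun v _ ↦ lie_mem_centralizerAdRange (isCompl_ker_range_ad hQ hinv z).codisjoint v
  have hzc : z ∈ LieAlgebra.center ℝ g :=
    (LieModule.mem_maxTrivSubmodule ℝ g g z).mpr fun t ↦ by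
      rw [← lie_skew, (mem_centralizerAdRange.mp (hD ▸ Submodule.mem_top)).1, neg_zero]
  simpa [hcenter] using hzc

/-- Lemma 4.2 of the paper: let `g` be a compact semisimple Lie algebra (so `z(g) = 0`)
with a biinvariant inner product `Q` and an involution `τ` with `+1`-eigenspace `k`,
such that `g` has no proper nonzero `τ`-invariant ideal.  Let `s ⊊ g` be a proper
subalgebra, `l₁, l₂ ⊆ s` subalgebras with `(ad_{l₂} ∘ ad_{l₁})|_{s⊥} = 0`, and suppose
there is a nonzero `ad_s`- and `τ`-invariant subspace `W ⊆ s⊥` with `[l₁, W] = W`.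
Then `l₂ = 0`. -/
theorem l2_eq_bot_of_composition_vanishes
    (g : Type*) [LieRing g] [LieAlgebra ℝ g] [FiniteDimensional ℝ g]
    [LieAlgebra.IsSemisimple ℝ g]
    (hcenter : LieAlgebra.center ℝ g = ⊥)
    (Q : LinearMap.BilinForm ℝ g)
    (hsymm : ∀ x y : g, Q x y = Q y x)
    (hpos : ∀ x : g, x ≠ 0 → 0 < Q x x)
    (hbi : ∀ z x y : g, Q ⁅z, x⁆ y + Q x ⁅z, y⁆ = 0)
    (τ : g →ₗ⁅ℝ⁆ g)
    (hτinv : ∀ x : g, τ (τ x) = x)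
    (k : Submodule ℝ g)
    (hk : ∀ x : g, τ x = x ↔ x ∈ k)
    (hirr : ∀ I : LieIdeal ℝ g, (∀ x ∈ I, τ x ∈ I) → I = ⊥ ∨ I = ⊤)
    (s l₁ l₂ W : Submodule ℝ g)
    (hproper : s ≠ ⊤)
    (hs : ∀ x ∈ s, ∀ y ∈ s, ⁅x, y⁆ ∈ s)
    (hl₁s : l₁ ≤ s) (hl₂s : l₂ ≤ s)
    (hl₁ : ∀ x ∈ l₁, ∀ y ∈ l₁, ⁅x, y⁆ ∈ l₁)
    (hl₂ : ∀ x ∈ l₂, ∀ y ∈ l₂, ⁅x, y⁆ ∈ l₂)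
    (hvanish : ∀ x ∈ l₁, ∀ y ∈ l₂, ∀ v ∈ Q.orthogonal s, ⁅y, ⁅x, v⁆⁆ = 0)
    (hWne : W ≠ ⊥)
    (hWperp : W ≤ Q.orthogonal s)
    (hWinv : ∀ x ∈ s, ∀ w ∈ W, ⁅x, w⁆ ∈ W)
    (hWτ : ∀ w ∈ W, τ w ∈ W)
    (hl₁W : bracketSpan l₁ W = W) :
    l₂ = ⊥ :=
  l2_eq_bot_of_composition_vanishes_general g hcenter Q hsymm hpos hbi τ hirr s l₁ l₂ W hs hl₁s hl₂s
    hvanish hWne hWperp hWinv hWτ hl₁W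
end

section
/- Let g be a Lie algebra with a biinvariant inner product Q, let h, k ⊆ g be subalgebras, let H := h⊥ ∩ k⊥, and let v₀ ∈ H satisfy [v₀, H] = 0. Define ω(x,y) := Q(v₀, [x,y]) on g. Then both V₁ := pr_{s⊥}(h) and V₂ := pr_{s⊥}(k) are isotropic for ω restricted to s⊥, where s := centralizer of v₀; concretely: Q(v₀, [x₁, x₂]) = 0 for all x₁, x₂ ∈ pr_{s⊥}(h), and similarly for pr_{s⊥}(k). -/
/-!
Elements `c` of the centralizer of `v₀` are `ω`-null, where `ω(x, y) = Q(v₀, [x, y])`: by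
invariance `Q(v₀, [c, y]) = -Q([c, v₀], y) = 0`. Hence `ω(x₁, x₂) = ω(x₁ + c₁, x₂ + c₂)` for
`cᵢ ∈ s`, and the right-hand side vanishes when both `xᵢ + cᵢ` lie in `h` (resp. `k`).
-/

namespace LinearMap.BilinForm

variable {R L : Type*} [CommRing R] [LieRing L] [LieAlgebra R L]
  {Q : LinearMap.BilinForm R L} {v : L}

lemma apply_lie_eq_zero_of_lie_eq_zero (hQ : Q.lieInvariant L) {c : L} (hc : ⁅v, c⁆ = 0)
    (y : L) : Q v ⁅c, y⁆ = 0 := by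
  have hcv : ⁅c, v⁆ = 0 := by rw [← lie_skew, hc, neg_zero]
  simpa [hcv] using (hQ c v y).symm

lemma apply_lie_add_add_of_mem_ker_ad (hQ : Q.lieInvariant L) {c₁ c₂ : L}
    (hc₁ : c₁ ∈ (LieAlgebra.ad R L v).ker) (hc₂ : c₂ ∈ (LieAlgebra.ad R L v).ker) (x₁ x₂ : L) :
    Q v ⁅x₁ + c₁, x₂ + c₂⁆ = Q v ⁅x₁, x₂⁆ := by
  have h₁ : Q v ⁅c₁, x₂ + c₂⁆ = 0 := apply_lie_eq_zero_of_lie_eq_zero hQ hc₁ _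
  have h₂ : Q v ⁅x₁, c₂⁆ = 0 := by
    rw [← lie_skew, map_neg, apply_lie_eq_zero_of_lie_eq_zero hQ hc₂, neg_zero]
  rw [add_lie, map_add, h₁, add_zero, lie_add, map_add, h₂, add_zero]

lemma apply_lie_eq_zero_of_add_mem_ker_ad (hQ : Q.lieInvariant L) {m : Set L}
    (hm : ∀ a ∈ m, ∀ b ∈ m, Q v ⁅a, b⁆ = 0) {x₁ x₂ : L}
    (h₁ : ∃ c₁ ∈ (LieAlgebra.ad R L v).ker, x₁ + c₁ ∈ m)
    (h₂ : ∃ c₂ ∈ (LieAlgebra.ad R L v).ker, x₂ + c₂ ∈ m) :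
    Q v ⁅x₁, x₂⁆ = 0 := by
  obtain ⟨c₁, hc₁, hm₁⟩ := h₁
  obtain ⟨c₂, hc₂, hm₂⟩ := h₂
  rw [← apply_lie_add_add_of_mem_ker_ad hQ hc₁ hc₂]
  exact hm _ hm₁ _ hm₂

end LinearMap.BilinForm

theorem projections_isotropic_general
    (g : Type*) [LieRing g] [LieAlgebra ℝ g]
    (Q : LinearMap.BilinForm ℝ g)
    (hbi : ∀ z x y : g, Q ⁅z, x⁆ y + Q x ⁅z, y⁆ = 0)
    (h k : Submodule ℝ g)
    (v₀ : g)
    (hv₀h : ∀ a ∈ h, ∀ b ∈ h, Q v₀ ⁅a, b⁆ = 0)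
    (hv₀k : ∀ a ∈ k, ∀ b ∈ k, Q v₀ ⁅a, b⁆ = 0)
    (s : Submodule ℝ g)
    (hs : s = LinearMap.ker (LieAlgebra.ad ℝ g v₀)) :
    (∀ x₁ ∈ Q.orthogonal s, ∀ x₂ ∈ Q.orthogonal s,
      (∃ k₁ ∈ s, x₁ + k₁ ∈ h) → (∃ k₂ ∈ s, x₂ + k₂ ∈ h) → Q v₀ ⁅x₁, x₂⁆ = 0) ∧
    (∀ x₁ ∈ Q.orthogonal s, ∀ x₂ ∈ Q.orthogonal s,
      (∃ k₁ ∈ s, x₁ + k₁ ∈ k) → (∃ k₂ ∈ s, x₂ + k₂ ∈ k) → Q v₀ ⁅x₁, x₂⁆ = 0) := by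
  have hQ : Q.lieInvariant g := fun z x y => eq_neg_of_add_eq_zero_left (hbi z x y)
  subst hs
  exact ⟨fun _ _ _ _ => Q.apply_lie_eq_zero_of_add_mem_ker_ad hQ hv₀h,
    fun _ _ _ _ => Q.apply_lie_eq_zero_of_add_mem_ker_ad hQ hv₀k⟩

/-- Lemma 4.3.1 of the paper: let `g` be a finite-dimensional real Lie algebra with a
biinvariant inner product `Q`, `h, k ⊆ g` subalgebras, `H := h⊥ ∩ k⊥` and `v₀ ∈ H` with
`[v₀, H] = 0` and `Q(v₀, [h, h]) = 0 = Q(v₀, [k, k])`.  Let `s` be the centralizer of `v₀`.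
Then both projections `pr_{s⊥}(h)` and `pr_{s⊥}(k)` are isotropic for the form
`ω(x, y) := Q(v₀, [x, y])`: concretely, for `x₁, x₂ ∈ s⊥` with `xᵢ + kᵢ ∈ h` for some
`kᵢ ∈ s` we have `Q(v₀, [x₁, x₂]) = 0`, and similarly for `k`. -/
theorem projections_isotropic
    (g : Type*) [LieRing g] [LieAlgebra ℝ g] [FiniteDimensional ℝ g]
    (Q : LinearMap.BilinForm ℝ g)
    (hsymm : ∀ x y : g, Q x y = Q y x)
    (hpos : ∀ x : g, x ≠ 0 → 0 < Q x x)
    (hbi : ∀ z x y : g, Q ⁅z, x⁆ y + Q x ⁅z, y⁆ = 0)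
    (h k : Submodule ℝ g)
    (hh : ∀ x ∈ h, ∀ y ∈ h, ⁅x, y⁆ ∈ h)
    (hk : ∀ x ∈ k, ∀ y ∈ k, ⁅x, y⁆ ∈ k)
    (v₀ : g)
    (hv₀H : v₀ ∈ Q.orthogonal h ⊓ Q.orthogonal k)
    (hv₀comm : ∀ w ∈ Q.orthogonal h ⊓ Q.orthogonal k, ⁅v₀, w⁆ = 0)
    (hv₀h : ∀ a ∈ h, ∀ b ∈ h, Q v₀ ⁅a, b⁆ = 0)
    (hv₀k : ∀ a ∈ k, ∀ b ∈ k, Q v₀ ⁅a, b⁆ = 0)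
    (s : Submodule ℝ g)
    (hs : s = LinearMap.ker (LieAlgebra.ad ℝ g v₀)) :
    (∀ x₁ ∈ Q.orthogonal s, ∀ x₂ ∈ Q.orthogonal s,
      (∃ k₁ ∈ s, x₁ + k₁ ∈ h) → (∃ k₂ ∈ s, x₂ + k₂ ∈ h) → Q v₀ ⁅x₁, x₂⁆ = 0) ∧
    (∀ x₁ ∈ Q.orthogonal s, ∀ x₂ ∈ Q.orthogonal s,
      (∃ k₁ ∈ s, x₁ + k₁ ∈ k) → (∃ k₂ ∈ s, x₂ + k₂ ∈ k) → Q v₀ ⁅x₁, x₂⁆ = 0) :=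
  projections_isotropic_general g Q hbi h k v₀ hv₀h hv₀k s hs
end

section
/- Let V₂ be a finite-dimensional real inner product space, P₀ : V₂ → V₂ symmetric positive definite, φ : V₂ → V₂ symmetric, and A : V₂ → V₂ symmetric with [A, P₀] = 0. Work in V := V₂ ⊗ ℂ with J = multiplication by i, and set V₁ := {Jx + P₀⁻¹φx : x ∈ V₂}. If ⟨JA u, w⟩ = 0 for all u, w ∈ V₁, then [P₀⁻¹A, φ] = 0. -/
/-!
Writing `C = ⁅P₀⁻¹ A, φ⁆`, expanding the hypothesis with `J² = -1`, `V₂ ⊥ J V₂` and the symmetry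
of `P₀⁻¹` and `φ` gives `⟪C x, y⟫ = 0` for all `x, y ∈ V₂`. As `C` preserves `V₂`, it vanishes
on `V₂`; as it commutes with `J`, it also vanishes on `J V₂ = V₂ᗮ`, hence everywhere.
-/

open RealInnerProductSpace

theorem LinearEquiv.symm_apply_mem_of_forall_apply_mem {k M : Type*} [DivisionRing k]
    [AddCommGroup M] [Module k M] {p : Submodule k M} [FiniteDimensional k p] (e : M ≃ₗ[k] M)
    (he : ∀ x ∈ p, e x ∈ p) : ∀ x ∈ p, e.symm x ∈ p := by
  have hmap : p.map (e : M →ₗ[k] M) = p :=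
    Submodule.eq_of_le_of_finrank_eq (Submodule.map_le_iff_le_comap.2 he) (e.finrank_map_eq p)
  intro x hx
  rwa [← hmap, Submodule.mem_map_equiv] at hx

theorem LinearMap.eq_zero_of_commute_of_map_eq_orthogonal {𝕜 V : Type*} [RCLike 𝕜]
    [NormedAddCommGroup V] [InnerProductSpace 𝕜 V] {K : Submodule 𝕜 V}
    [K.HasOrthogonalProjection] {J C : Module.End 𝕜 V} (hJK : K.map J = Kᗮ)
    (hJC : Commute J C) (hC : ∀ x ∈ K, C x = 0) : C = 0 := by
  have hKperp : Kᗮ ≤ ker C := by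
    rw [← hJK]
    rintro _ ⟨x, hx, rfl⟩
    change C (J x) = 0
    rw [← Module.End.mul_apply, ← hJC.eq, Module.End.mul_apply, hC x hx, map_zero]
  have htop : ⊤ ≤ ker C := K.sup_orthogonal_of_hasOrthogonalProjection ▸ sup_le hC hKperp
  exact ker_eq_top.1 (eq_top_iff.2 htop)

section

variable {V : Type*} [NormedAddCommGroup V] [InnerProductSpace ℝ V] {K : Submodule ℝ V}
  {J Q φ A : Module.End ℝ V}

theorem inner_apply_graph_eq_inner_lie (hJorth : ∀ x y, ⟪J x, J y⟫ = ⟪x, y⟫)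
    (hJsq : ∀ x, J (J x) = -x) (hJK : K.map J ≤ Kᗮ) (hQ : Q.IsSymmetric) (hφ : φ.IsSymmetric)
    (hJA : Commute J A) (hQA : Commute Q A) (hQK : ∀ x ∈ K, Q x ∈ K)
    (hφK : ∀ x ∈ K, φ x ∈ K) (hAK : ∀ x ∈ K, A x ∈ K) {x y : V} (hx : x ∈ K) (hy : y ∈ K) :
    ⟪J (A (J x + Q (φ x))), J y + Q (φ y)⟫ = ⟪⁅Q * A, φ⁆ x, y⟫ := by
  have hJperp : ∀ a ∈ K, ∀ b ∈ K, ⟪J a, b⟫ = 0 := fun a ha b hb =>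
    Submodule.inner_left_of_mem_orthogonal hb (hJK (Submodule.mem_map_of_mem ha))
  have hJAJ : J (A (J x)) = -A x := by
    rw [← Module.End.mul_apply, hJA.eq, Module.End.mul_apply, hJsq, map_neg]
  have hAQ : A (Q (φ x)) = Q (A (φ x)) := by
    rw [← Module.End.mul_apply, ← hQA.eq, Module.End.mul_apply]
  have hAx : ⟪A x, J y⟫ = 0 := by rw [real_inner_comm]; exact hJperp y hy _ (hAK x hx)
  have hcross : ⟪J (Q (A (φ x))), Q (φ y)⟫ = 0 :=
    hJperp _ (hQK _ (hAK _ (hφK x hx))) _ (hQK _ (hφK y hy))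
  have hsymm : ⟪A x, Q (φ y)⟫ = ⟪φ (Q (A x)), y⟫ := by rw [← hQ, ← hφ]
  rw [map_add, map_add, hJAJ, hAQ, Ring.lie_def, LinearMap.sub_apply]
  simp only [Module.End.mul_apply, inner_add_left, inner_add_right, inner_neg_left,
    inner_sub_left, hAx, hcross, hsymm, hJorth]
  ring

end

theorem commutator_P0inv_A_phi_eq_zero_general
    (V : Type*) [NormedAddCommGroup V] [InnerProductSpace ℝ V] [FiniteDimensional ℝ V]
    (V₂ : Submodule ℝ V)
    (J P₀ Q₀ φ A : V →ₗ[ℝ] V)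
    (hJorth : ∀ x y : V, ⟪J x, J y⟫ = ⟪x, y⟫)
    (hJsq : ∀ x : V, J (J x) = -x)
    (hJV₂ : Submodule.map J V₂ = V₂ᗮ)
    (hPsymm : ∀ x y : V, ⟪P₀ x, y⟫ = ⟪x, P₀ y⟫)
    (hJP : J ∘ₗ P₀ = P₀ ∘ₗ J)
    (hPV₂ : ∀ x ∈ V₂, P₀ x ∈ V₂)
    (hQ₀P₀ : Q₀ ∘ₗ P₀ = LinearMap.id) (hP₀Q₀ : P₀ ∘ₗ Q₀ = LinearMap.id)
    (hφsymm : ∀ x y : V, ⟪φ x, y⟫ = ⟪x, φ y⟫)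
    (hφJ : J ∘ₗ φ = φ ∘ₗ J)
    (hφV₂ : ∀ x ∈ V₂, φ x ∈ V₂)
    (hAJ : J ∘ₗ A = A ∘ₗ J)
    (hAV₂ : ∀ x ∈ V₂, A x ∈ V₂)
    (hAP₀ : A ∘ₗ P₀ = P₀ ∘ₗ A)
    (hiso : ∀ x ∈ V₂, ∀ y ∈ V₂,
      ⟪J (A (J x + Q₀ (φ x))), J y + Q₀ (φ y)⟫ = 0) :
    (Q₀ ∘ₗ A) ∘ₗ φ = φ ∘ₗ (Q₀ ∘ₗ A) := by
  let P : V ≃ₗ[ℝ] V := .ofLinearMap P₀ Q₀ hP₀Q₀ hQ₀P₀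
  let Pu : (Module.End ℝ V)ˣ := ⟨P₀, Q₀, hP₀Q₀, hQ₀P₀⟩
  have hQsymm : Q₀.IsSymmetric := LinearMap.IsSymmetric.toLinearMap_symm (T := P) hPsymm
  have hQV₂ : ∀ x ∈ V₂, Q₀ x ∈ V₂ := P.symm_apply_mem_of_forall_apply_mem hPV₂
  have hQA : Commute Q₀ A := Commute.units_inv_left (u := Pu) hAP₀.symm
  have hJQ : Commute J Q₀ := Commute.units_inv_right (u := Pu) hJP
  have hCV₂ : ∀ x ∈ V₂, ⁅Q₀ * A, φ⁆ x = 0 := by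
    intro x hx
    have hmem : ⁅Q₀ * A, φ⁆ x ∈ V₂ := by
      rw [Ring.lie_def]
      exact V₂.sub_mem (hQV₂ _ (hAV₂ _ (hφV₂ x hx))) (hφV₂ _ (hQV₂ _ (hAV₂ x hx)))
    have horth : ⁅Q₀ * A, φ⁆ x ∈ V₂ᗮ := (V₂.mem_orthogonal' _).2 fun y hy => by
      rw [← inner_apply_graph_eq_inner_lie hJorth hJsq hJV₂.le hQsymm hφsymm
        hAJ hQA hQV₂ hφV₂ hAV₂ hx hy, hiso x hx y hy]
    have hbot : ⁅Q₀ * A, φ⁆ x ∈ V₂ ⊓ V₂ᗮ := Submodule.mem_inf.2 ⟨hmem, horth⟩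
    rwa [V₂.inf_orthogonal_eq_bot, Submodule.mem_bot] at hbot
  have hJC : Commute J ⁅Q₀ * A, φ⁆ := by
    have hJQA : Commute J (Q₀ * A) := hJQ.mul_right hAJ
    have hJφ : Commute J φ := hφJ
    rw [Ring.lie_def]
    exact (hJQA.mul_right hJφ).sub_right (hJφ.mul_right hJQA)
  exact commute_iff_lie_eq.2 (LinearMap.eq_zero_of_commute_of_map_eq_orthogonal hJV₂ hJC hCV₂)

/-- Lemma 4.5.1 of the paper: in `V = V₂ ⊗ ℂ` (modelled as `V = V₂ ⊕ J V₂` with `J` the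
complex structure of multiplication by `i`), let `P₀` be symmetric positive definite,
`φ` symmetric and `A` symmetric with `[A, P₀] = 0`, all commuting with `J` and preserving
`V₂`, and `Q₀ = P₀⁻¹`.  If `V₁ := {Jx + P₀⁻¹ φ x : x ∈ V₂}` satisfies
`⟪J A u, w⟫ = 0` for all `u, w ∈ V₁`, then `[P₀⁻¹ A, φ] = 0`. -/
theorem commutator_P0inv_A_phi_eq_zero
    (V : Type*) [NormedAddCommGroup V] [InnerProductSpace ℝ V] [FiniteDimensional ℝ V]
    (V₂ : Submodule ℝ V)
    (J P₀ Q₀ φ A : V →ₗ[ℝ] V)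
    (hJorth : ∀ x y : V, ⟪J x, J y⟫ = ⟪x, y⟫)
    (hJsq : ∀ x : V, J (J x) = -x)
    (hJV₂ : Submodule.map J V₂ = V₂ᗮ)
    (hPsymm : ∀ x y : V, ⟪P₀ x, y⟫ = ⟪x, P₀ y⟫)
    (hPpos : ∀ x : V, x ≠ 0 → 0 < ⟪P₀ x, x⟫)
    (hJP : J ∘ₗ P₀ = P₀ ∘ₗ J)
    (hPV₂ : ∀ x ∈ V₂, P₀ x ∈ V₂)
    (hQ₀P₀ : Q₀ ∘ₗ P₀ = LinearMap.id) (hP₀Q₀ : P₀ ∘ₗ Q₀ = LinearMap.id)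
    (hφsymm : ∀ x y : V, ⟪φ x, y⟫ = ⟪x, φ y⟫)
    (hφJ : J ∘ₗ φ = φ ∘ₗ J)
    (hφV₂ : ∀ x ∈ V₂, φ x ∈ V₂)
    (hAsymm : ∀ x y : V, ⟪A x, y⟫ = ⟪x, A y⟫)
    (hAJ : J ∘ₗ A = A ∘ₗ J)
    (hAV₂ : ∀ x ∈ V₂, A x ∈ V₂)
    (hAP₀ : A ∘ₗ P₀ = P₀ ∘ₗ A)
    (hiso : ∀ x ∈ V₂, ∀ y ∈ V₂,
      ⟪J (A (J x + Q₀ (φ x))), J y + Q₀ (φ y)⟫ = 0) :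
    (Q₀ ∘ₗ A) ∘ₗ φ = φ ∘ₗ (Q₀ ∘ₗ A) :=
  commutator_P0inv_A_phi_eq_zero_general V V₂ J P₀ Q₀ φ A hJorth hJsq hJV₂ hPsymm hJP hPV₂ hQ₀P₀
    hP₀Q₀ hφsymm hφJ hφV₂ hAJ hAV₂ hAP₀ hiso
end

section
/- Let V₂ be a real inner product space, P₀ symmetric positive definite on V₂, φ symmetric on V₂, k a skew-symmetric operator on V₂, and x ∈ V₂ a nonzero vector with φ x = ν x for some ν ∈ ℝ. If ν·kx - φ(kx) = μ(P₀² + ν²)x for some μ ∈ ℝ, then μ = 0. -/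
/-!
Pair both sides with `x`. By symmetry of `φ`, `⟪φ y, x⟫ = ⟪y, φ x⟫ = ν ⟪y, x⟫`, so the left side
pairs to `0` for every `y`, in particular `y = k x`; by symmetry and positivity of `P₀`, the right side
pairs to `μ (‖P₀ x‖² + ν² ‖x‖²)` with a positive second factor.
-/

open RealInnerProductSpace

namespace LinearMap.IsSymmetric

variable {E : Type*} [NormedAddCommGroup E] [InnerProductSpace ℝ E]

lemma inner_smul_sub_apply_eigenvector_eq_zero {φ : E →ₗ[ℝ] E} (hφ : φ.IsSymmetric)
    {ν : ℝ} {x : E} (hx : φ x = ν • x) (y : E) : ⟪ν • y - φ y, x⟫ = 0 := by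
  rw [inner_sub_left, real_inner_smul_left, hφ, hx, real_inner_smul_right, sub_self]

lemma inner_apply_apply_add_smul_self_pos {P : E →ₗ[ℝ] E} (hP : P.IsSymmetric)
    (hPpos : ∀ x : E, x ≠ 0 → 0 < ⟪P x, x⟫) {x : E} (hx : x ≠ 0) (c : ℝ) :
    0 < ⟪P (P x) + c ^ 2 • x, x⟫ := by
  have hPx : P x ≠ 0 := fun h => by simpa [h] using hPpos x hx
  rw [inner_add_left, hP, real_inner_smul_left, real_inner_self_eq_norm_sq,
    real_inner_self_eq_norm_sq]
  have hPx_sq : 0 < ‖P x‖ ^ 2 := pow_pos (norm_pos_iff.2 hPx) 2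
  positivity

end LinearMap.IsSymmetric

theorem mu_eq_zero_general
    (V₂ : Type*) [NormedAddCommGroup V₂] [InnerProductSpace ℝ V₂]
    (P₀ φ k : V₂ →ₗ[ℝ] V₂)
    (hPsymm : ∀ x y : V₂, ⟪P₀ x, y⟫ = ⟪x, P₀ y⟫)
    (hPpos : ∀ x : V₂, x ≠ 0 → 0 < ⟪P₀ x, x⟫)
    (hφsymm : ∀ x y : V₂, ⟪φ x, y⟫ = ⟪x, φ y⟫)
    (x : V₂) (hx : x ≠ 0)
    (ν μ : ℝ)
    (hνx : φ x = ν • x)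
    (heq : ν • k x - φ (k x) = μ • (P₀ (P₀ x) + (ν ^ 2) • x)) :
    μ = 0 := by
  have hpair : ⟪ν • k x - φ (k x), x⟫ = ⟪μ • (P₀ (P₀ x) + (ν ^ 2) • x), x⟫ := by rw [heq]
  rw [LinearMap.IsSymmetric.inner_smul_sub_apply_eigenvector_eq_zero hφsymm hνx,
    real_inner_smul_left] at hpair
  exact (mul_eq_zero.1 hpair.symm).resolve_right
    (LinearMap.IsSymmetric.inner_apply_apply_add_smul_self_pos hPsymm hPpos hx ν).ne'

/-- The key computation of Lemma 4.5.2: let `P₀` be symmetric positive definite, `φ`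
symmetric, `k` skew-symmetric on a real inner product space `V₂`, and `x ≠ 0` with
`φ x = ν x`.  If `ν·kx - φ(kx) = μ(P₀² + ν²)x` for some `μ ∈ ℝ`, then `μ = 0`. -/
theorem mu_eq_zero
    (V₂ : Type*) [NormedAddCommGroup V₂] [InnerProductSpace ℝ V₂] [FiniteDimensional ℝ V₂]
    (P₀ φ k : V₂ →ₗ[ℝ] V₂)
    (hPsymm : ∀ x y : V₂, ⟪P₀ x, y⟫ = ⟪x, P₀ y⟫)
    (hPpos : ∀ x : V₂, x ≠ 0 → 0 < ⟪P₀ x, x⟫)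
    (hφsymm : ∀ x y : V₂, ⟪φ x, y⟫ = ⟪x, φ y⟫)
    (hkskew : ∀ x y : V₂, ⟪k x, y⟫ = -⟪x, k y⟫)
    (x : V₂) (hx : x ≠ 0)
    (ν μ : ℝ)
    (hνx : φ x = ν • x)
    (heq : ν • k x - φ (k x) = μ • (P₀ (P₀ x) + (ν ^ 2) • x)) :
    μ = 0 :=
  mu_eq_zero_general V₂ P₀ φ k hPsymm hPpos hφsymm x hx ν μ hνx heq
end
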